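/- Let ρ ∈ (0,1), L_u ≥ 0, μ ≥ 1, m ≥ μ, ū ≥ 0, ε ≥ 0. Let h_S : ℕ → ℝ satisfy 0 ≤ h_S(i) ≤ L_u for i = 1,…,μ and 0 ≤ h_S(i) ≤ L_u·ρ^(i−μ) for i > μ; let u : ℤ → ℝ satisfy |u(k)| ≤ ū for all k; let y(k) := Σ_{i=1}^∞ h_S(i)·u(k−i); let v : ℤ → ℝ satisfy |v(k)| ≤ ε for all k, and set ỹ(k) := y(k) + v(k). Define the regressor φ(k) := (u(k−1), u(k−2), …, u(k−m)) ∈ ℝ^m and the truncated true model h_m := (h_S(1), …, h_S(m)) ∈ ℝ^m. Then for every k ∈ ℤ, |ỹ(k) − φ(k)ᵀh_m| ≤ η_m + ε, where η_m := ū·L_u·ρ^(m−μ)·ρ/(1−ρ). Consequently, for every t and every block length s ≥ 1, h_m belongs to the non-falsified set Δ_s(t) := {h ∈ ℝ^m : |ỹ(k) − φ(k)ᵀh| ≤ η_m + ε for all k ∈ {t−s, …, t−1}}. -/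

import Mathlib

/-!
Splitting the output series at index `m`, the residual `ỹ(k) − φ(k)ᵀ h_m` is the tail
`∑_{i > m} h_S(i) u(k − i)` plus the noise `v(k)`. Past `μ` the impulse response decays
geometrically, so the tail is dominated termwise by `ū L ρ^(m−μ) ρ · ρ^i`, whose sum is `η_m`.
-/

open Finset

lemma abs_tsum_le_of_abs_le_geometric {f : ℕ → ℝ} {C r : ℝ} (hr₀ : 0 ≤ r) (hr₁ : r < 1)
    (hf : ∀ i, |f i| ≤ C * r ^ i) : |∑' i, f i| ≤ C / (1 - r) := by
  simpa only [Real.norm_eq_abs, div_eq_mul_inv] using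
    tsum_of_norm_bounded (f := f) ((hasSum_geometric_of_lt_one hr₀ hr₁).mul_left C) hf

lemma abs_tsum_sub_sum_range_le {f : ℕ → ℝ} {C r : ℝ} (m : ℕ) (hr₀ : 0 ≤ r) (hr₁ : r < 1)
    (hf : ∀ i, |f (i + m)| ≤ C * r ^ i) :
    |∑' i, f i - ∑ i ∈ range m, f i| ≤ C / (1 - r) := by
  have hsum : Summable f := (summable_nat_add_iff m).mp <|
    Summable.of_norm_bounded ((summable_geometric_of_lt_one hr₀ hr₁).mul_left C) hf
  rw [← hsum.sum_add_tsum_nat_add m, add_sub_cancel_left]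
  exact abs_tsum_le_of_abs_le_geometric hr₀ hr₁ hf

lemma abs_mul_le_of_decay {hS : ℕ → ℝ} {L ρ ubar a : ℝ} {μ i : ℕ}
    (hS2 : ∀ i, μ < i → 0 ≤ hS i ∧ hS i ≤ L * ρ ^ (i - μ)) (hi : μ < i)
    (ha : |a| ≤ ubar) : |hS i * a| ≤ ubar * L * ρ ^ (i - μ) := by
  obtain ⟨h₀, h₁⟩ := hS2 i hi
  rw [abs_mul, abs_of_nonneg h₀]
  calc hS i * |a| ≤ L * ρ ^ (i - μ) * ubar := mul_le_mul h₁ ha (abs_nonneg a) (h₀.trans h₁)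
    _ = ubar * L * ρ ^ (i - μ) := by ring

theorem true_model_in_nonfalsified_set_general
    (ρ L ubar ε : ℝ) (μ m : ℕ)
    (hρ : ρ ∈ Set.Ioo (0 : ℝ) 1) (hm : μ ≤ m)
    (hS : ℕ → ℝ)
    (hS2 : ∀ i, μ < i → 0 ≤ hS i ∧ hS i ≤ L * ρ ^ (i - μ))
    (u : ℤ → ℝ) (hu : ∀ k, |u k| ≤ ubar)
    (v : ℤ → ℝ) (hv : ∀ k, |v k| ≤ ε)
    (y : ℤ → ℝ) (hy : ∀ k, y k = ∑' i : ℕ, hS (i + 1) * u (k - (i + 1)))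
    (ytilde : ℤ → ℝ) (hyt : ∀ k, ytilde k = y k + v k)
    (φ : ℤ → Fin m → ℝ) (hφ : ∀ k (j : Fin m), φ k j = u (k - ((j : ℕ) + 1)))
    (hm' : Fin m → ℝ) (hhm : ∀ j : Fin m, hm' j = hS ((j : ℕ) + 1)) :
    (∀ k : ℤ, |ytilde k - ∑ j, φ k j * hm' j| ≤
        ubar * L * ρ ^ (m - μ) * ρ / (1 - ρ) + ε) ∧
      ∀ t : ℤ, ∀ s : ℕ, 1 ≤ s →
        hm' ∈ {h : Fin m → ℝ | ∀ k : ℤ, t - s ≤ k → k ≤ t - 1 →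
          |ytilde k - ∑ j, φ k j * h j| ≤
            ubar * L * ρ ^ (m - μ) * ρ / (1 - ρ) + ε} := by
  have hresidual : ∀ k : ℤ, |ytilde k - ∑ j, φ k j * hm' j| ≤
      ubar * L * ρ ^ (m - μ) * ρ / (1 - ρ) + ε := by
    intro k
    have htail : ∀ i, |hS (i + m + 1) * u (k - ↑(i + m + 1))| ≤
        ubar * L * ρ ^ (m - μ) * ρ * ρ ^ i := by
      intro i
      have hexp : i + m + 1 - μ = m - μ + 1 + i := by omega
      calc _ ≤ ubar * L * ρ ^ (i + m + 1 - μ) := abs_mul_le_of_decay hS2 (by omega) (hu _)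
        _ = _ := by rw [hexp, pow_add, pow_succ]; ring
    have htrunc : ∑ j, φ k j * hm' j = ∑ i ∈ range m, hS (i + 1) * u (k - (i + 1)) := by
      simp only [hφ, hhm, mul_comm (u _)]
      exact Fin.sum_univ_eq_sum_range (fun i => hS (i + 1) * u (k - (i + 1))) m
    calc |ytilde k - ∑ j, φ k j * hm' j|
        = |(y k - ∑ i ∈ range m, hS (i + 1) * u (k - (i + 1))) + v k| := by
          rw [hyt, htrunc]; ring_nf
      _ ≤ |y k - ∑ i ∈ range m, hS (i + 1) * u (k - (i + 1))| + |v k| := abs_add_le _ _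
      _ ≤ _ := by
          rw [hy]
          gcongr
          · exact abs_tsum_sub_sum_range_le m hρ.1.le hρ.2 (by exact_mod_cast htail)
          · exact hv k
  exact ⟨hresidual, fun t s _ k _ _ => hresidual k⟩

/-- The truncated true impulse response is never falsified: every measurement
satisfies `|ỹ(k) − φ(k)ᵀ h_m| ≤ η_m + ε`, hence `h_m` belongs to every
non-falsified set `Δ_s(t)`. -/
theorem true_model_in_nonfalsified_set
    (ρ L ubar ε : ℝ) (μ m : ℕ)
    (hρ : ρ ∈ Set.Ioo (0 : ℝ) 1) (hL : 0 ≤ L) (hμ : 1 ≤ μ) (hm : μ ≤ m)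
    (hubar : 0 ≤ ubar) (hε : 0 ≤ ε)
    (hS : ℕ → ℝ)
    (hS1 : ∀ i, 1 ≤ i → i ≤ μ → 0 ≤ hS i ∧ hS i ≤ L)
    (hS2 : ∀ i, μ < i → 0 ≤ hS i ∧ hS i ≤ L * ρ ^ (i - μ))
    (u : ℤ → ℝ) (hu : ∀ k, |u k| ≤ ubar)
    (v : ℤ → ℝ) (hv : ∀ k, |v k| ≤ ε)
    (y : ℤ → ℝ) (hy : ∀ k, y k = ∑' i : ℕ, hS (i + 1) * u (k - (i + 1)))
    (ytilde : ℤ → ℝ) (hyt : ∀ k, ytilde k = y k + v k)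
    (φ : ℤ → Fin m → ℝ) (hφ : ∀ k (j : Fin m), φ k j = u (k - ((j : ℕ) + 1)))
    (hm' : Fin m → ℝ) (hhm : ∀ j : Fin m, hm' j = hS ((j : ℕ) + 1)) :
    (∀ k : ℤ, |ytilde k - ∑ j, φ k j * hm' j| ≤
        ubar * L * ρ ^ (m - μ) * ρ / (1 - ρ) + ε) ∧
      ∀ t : ℤ, ∀ s : ℕ, 1 ≤ s →
        hm' ∈ {h : Fin m → ℝ | ∀ k : ℤ, t - s ≤ k → k ≤ t - 1 →
          |ytilde k - ∑ j, φ k j * h j| ≤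
            ubar * L * ρ ^ (m - μ) * ρ / (1 - ρ) + ε} :=
  true_model_in_nonfalsified_set_general ρ L ubar ε μ m hρ hm hS hS2 u hu v hv y hy ytilde hyt φ hφ
    hm' hhm
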